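/- arXiv:2206.00993 — 2 statements merged into one kernel-verified Lean document; each statement's English description precedes it below -/
import Mathlib

section
/- Let X be an arbitrary d×d complex matrix and let γ' = (1/2) * [[√(XX†), X], [X†, √(X†X)]] be the 2d×2d block matrix. Then for any vector ψ in ℂ^d (with √(XX†) invertible), the vector (ψ, -X†(√(XX†))⁻¹ψ) lies in the kernel of γ'. Consequently the rank of γ' is at most d. -/
/-!
Write `S = √(XX†)`. When `S` is invertible, `X† S⁻¹ X` is positive semidefinite and squares to
`X† S⁻¹ (S S) S⁻¹ X = X†X`, so it is `√(X†X)`. Hence `2γ'` factors as `[1; X†S⁻¹] · [S  X]`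
(the Schur complement of `S` vanishes), whose right factor has only `d` rows; and `[S  X]` kills
`(ψ, -X†S⁻¹ψ)` because `X X† S⁻¹ = S S S⁻¹ = S`.
-/

open Matrix
open scoped ComplexOrder

/-- The positive semidefinite square root of a positive semidefinite matrix
(the definition `Matrix.PosSemidef.sqrt` of the older Mathlib, removed since). -/
noncomputable def Matrix.PosSemidef.sqrt {n 𝕜 : Type*} [Fintype n] [RCLike 𝕜] [DecidableEq n]
    {A : Matrix n n 𝕜} (hA : A.PosSemidef) : Matrix n n 𝕜 :=
  hA.1.eigenvectorUnitary.1 * diagonal ((↑) ∘ (√·) ∘ hA.1.eigenvalues) *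
  (star hA.1.eigenvectorUnitary : Matrix n n 𝕜)

/-- γ' = (1/2)·[[√(XX†), X], [X†, √(X†X)]] as a block matrix on ℂ^d ⊕ ℂ^d. -/
noncomputable def gammaPrime {d : ℕ} (X : Matrix (Fin d) (Fin d) ℂ) :
    Matrix (Fin d ⊕ Fin d) (Fin d ⊕ Fin d) ℂ :=
  (1 / 2 : ℂ) • fromBlocks (Matrix.posSemidef_self_mul_conjTranspose X).sqrt X
    Xᴴ (Matrix.posSemidef_conjTranspose_mul_self X).sqrt

namespace Matrix.PosSemidef

variable {n 𝕜 : Type*} [Fintype n] [RCLike 𝕜] [DecidableEq n]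

open scoped MatrixOrder

theorem sqrt_eq_cfcSqrt {A : Matrix n n 𝕜} (hA : A.PosSemidef) : hA.sqrt = CFC.sqrt A := by
  rw [CFC.sqrt_eq_cfc, cfc_nnreal_eq_real _ A, hA.1.cfc_eq]
  simp only [IsHermitian.cfc, Matrix.PosSemidef.sqrt, Unitary.conjStarAlgAut_apply]
  congr 3
  ext i
  simp [Real.coe_sqrt, max_eq_left (hA.eigenvalues_nonneg i)]

theorem sqrt_mul_self {A : Matrix n n 𝕜} (hA : A.PosSemidef) : hA.sqrt * hA.sqrt = A := by
  rw [hA.sqrt_eq_cfcSqrt]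
  exact CFC.sqrt_mul_sqrt_self A hA.nonneg

theorem posSemidef_sqrt {A : Matrix n n 𝕜} (hA : A.PosSemidef) : hA.sqrt.PosSemidef := by
  rw [hA.sqrt_eq_cfcSqrt]
  exact (CFC.sqrt_nonneg A).posSemidef

theorem sqrt_eq_of_mul_self_eq {A B : Matrix n n 𝕜} (hA : A.PosSemidef) (hB : B.PosSemidef)
    (hAB : A * A = B) : hB.sqrt = A := by
  rw [hB.sqrt_eq_cfcSqrt, CFC.sqrt_eq_iff B A hB.nonneg hA.nonneg, hAB]

theorem sqrt_conjTranspose_mul_self_eq {X S : Matrix n n 𝕜} (hS : S.PosSemidef) (hSu : IsUnit S)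
    (hSX : S * S = X * Xᴴ) :
    (posSemidef_conjTranspose_mul_self X).sqrt = Xᴴ * S⁻¹ * X := by
  have hdet : IsUnit S.det := (isUnit_iff_isUnit_det S).mp hSu
  have hcancel : S⁻¹ * (S * S) * S⁻¹ = 1 := by
    rw [← Matrix.mul_assoc, nonsing_inv_mul S hdet, Matrix.one_mul, mul_nonsing_inv S hdet]
  refine sqrt_eq_of_mul_self_eq ?_ _ ?_
  · simpa using hS.inv.conjTranspose_mul_mul_same X
  · calc Xᴴ * S⁻¹ * X * (Xᴴ * S⁻¹ * X) = Xᴴ * (S⁻¹ * (X * Xᴴ) * S⁻¹) * X := by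
          simp only [Matrix.mul_assoc]
      _ = Xᴴ * X := by rw [← hSX, hcancel, Matrix.mul_one]

end Matrix.PosSemidef

namespace Matrix

variable {m n α : Type*} [Fintype n] [CommRing α]

theorem fromCols_mulVec_sum_elim_neg_mulVec [Fintype m] {A : Matrix n n α} {B : Matrix n m α}
    {C : Matrix m n α} (hBC : B * C = A) (ψ : n → α) :
    fromCols A B *ᵥ Sum.elim ψ (-(C *ᵥ ψ)) = 0 := by
  rw [fromCols_mulVec, Sum.elim_comp_inl, Sum.elim_comp_inr, mulVec_neg, mulVec_mulVec, hBC,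
    add_neg_cancel]

variable [DecidableEq n]

theorem fromBlocks_eq_fromRows_mul_fromCols {A : Matrix n n α} (hA : IsUnit A) (B : Matrix n m α)
    (C : Matrix m n α) :
    fromBlocks A B C (C * A⁻¹ * B) = fromRows 1 (C * A⁻¹) * fromCols A B := by
  rw [fromRows_mul, Matrix.one_mul, mul_fromCols, Matrix.mul_assoc C A⁻¹ A,
    nonsing_inv_mul A ((isUnit_iff_isUnit_det A).mp hA), Matrix.mul_one,
    fromRows_fromCols_eq_fromBlocks]

end Matrix

theorem stmt_0 {d : ℕ} (X : Matrix (Fin d) (Fin d) ℂ)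
    (hinv : IsUnit (Matrix.posSemidef_self_mul_conjTranspose X).sqrt) :
    (∀ ψ : Fin d → ℂ,
      gammaPrime X *ᵥ
        Sum.elim ψ (-((Xᴴ * ((Matrix.posSemidef_self_mul_conjTranspose X).sqrt)⁻¹) *ᵥ ψ)) = 0) ∧
    (gammaPrime X).rank ≤ d := by
  set hXX := posSemidef_self_mul_conjTranspose X
  set S := hXX.sqrt
  have hS : S * S = X * Xᴴ := hXX.sqrt_mul_self
  have hX_mul : X * (Xᴴ * S⁻¹) = S := by
    rw [← Matrix.mul_assoc, ← hS, Matrix.mul_assoc,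
      mul_nonsing_inv S ((isUnit_iff_isUnit_det S).mp hinv), Matrix.mul_one]
  have hfact : gammaPrime X = ((1 / 2 : ℂ) • fromRows 1 (Xᴴ * S⁻¹)) * fromCols S X := by
    rw [smul_mul, ← fromBlocks_eq_fromRows_mul_fromCols hinv,
      ← hXX.posSemidef_sqrt.sqrt_conjTranspose_mul_self_eq hinv hS]
    rfl
  refine ⟨fun ψ => ?_, ?_⟩
  · rw [hfact, ← mulVec_mulVec, fromCols_mulVec_sum_elim_neg_mulVec hX_mul, mulVec_zero]
  · calc (gammaPrime X).rank ≤ (fromCols S X).rank := hfact ▸ rank_mul_le_right _ _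
      _ ≤ Fintype.card (Fin d) := rank_le_card_height _
      _ = d := Fintype.card_fin d
end

section
/- Let γ be the 4d×4d matrix γ = (1/2)·[[√(XX†),0,0,X],[0,0,0,0],[0,0,0,0],[X†,0,0,√(X†X)]] for a d×d complex matrix X with trace norm Tr√(XX†) = 1. Then γ is a density matrix: γ is positive semidefinite and Tr γ = 1. -/
open Matrix Kronecker
open scoped ComplexOrder

/-- The basis vector |ij⟩ on ℂ² ⊗ ℂ². -/
def ket2 (i j : Fin 2) : Fin 2 × Fin 2 → ℂ := fun p => if p = (i, j) then 1 else 0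

/-!
For the Hermitian matrix `H = [[0, X], [X†, 0]]` we have `H² = diag(XX†, X†X)`, so
`|H| = diag(√(XX†), √(X†X))` and `[[√(XX†), X], [X†, √(X†X)]] = |H| + H = 2 H⁺ ≥ 0`.
The matrix `γ` is half of the congruence of this block matrix by the isometry that places the
two blocks on `|00⟩ ⊗ ℂᵈ` and `|11⟩ ⊗ ℂᵈ`. Its trace is `(Tr √(XX†) + Tr √(X†X)) / 2 = 1`,
because `XX†` and `X†X` have the same characteristic polynomial, hence the same eigenvalues.
-/

open scoped MatrixOrder

namespace Matrix

section Block

variable {m n ι R : Type*} [Fintype m] [Fintype n] [CommRing R] [StarRing R]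

theorem PosSemidef.fromBlocks_zero [PartialOrder R] [StarOrderedRing R] {A : Matrix m m R}
    {B : Matrix n n R} (hA : A.PosSemidef) (hB : B.PosSemidef) :
    (fromBlocks A 0 0 B).PosSemidef := by
  refine posSemidef_iff_dotProduct_mulVec.mpr ⟨hA.1.fromBlocks (by simp) hB.1, fun x => ?_⟩
  have hx : star x = Sum.elim (star (x ∘ Sum.inl)) (star (x ∘ Sum.inr)) := by
    ext (i | i) <;> rfl
  rw [fromBlocks_mulVec, hx, sumElim_dotProduct_sumElim]
  simpa using add_nonneg (hA.dotProduct_mulVec_nonneg _) (hB.dotProduct_mulVec_nonneg _)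

variable [DecidableEq n]

variable (n) in
def vecKroneckerOne (u : ι → R) : Matrix (ι × n) n R :=
  of fun p k => u p.1 * (1 : Matrix n n R) p.2 k

theorem vecKroneckerOne_mul_mul_conjTranspose (u v : ι → R) (A : Matrix n n R) :
    vecKroneckerOne n u * A * (vecKroneckerOne n v)ᴴ = vecMulVec u (star v) ⊗ₖ A := by
  ext ⟨i, k⟩ ⟨j, l⟩
  simp [vecKroneckerOne, mul_apply, one_apply, vecMulVec_apply, apply_ite star]
  ring

theorem kronecker_vecMulVec_add_eq_fromCols_mul_fromBlocks (u v : ι → R)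
    (A B C D : Matrix n n R) :
    vecMulVec u (star u) ⊗ₖ A + vecMulVec u (star v) ⊗ₖ B + vecMulVec v (star u) ⊗ₖ C
        + vecMulVec v (star v) ⊗ₖ D =
      fromCols (vecKroneckerOne n u) (vecKroneckerOne n v) * fromBlocks A B C D *
        (fromCols (vecKroneckerOne n u) (vecKroneckerOne n v))ᴴ := by
  rw [conjTranspose_fromCols_eq_fromRows_conjTranspose, fromCols_mul_fromBlocks,
    fromCols_mul_fromRows]
  simp only [Matrix.add_mul, vecKroneckerOne_mul_mul_conjTranspose]
  abel

end Block

section Sqrt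

variable {m n 𝕜 : Type*} [Fintype m] [Fintype n] [DecidableEq m] [DecidableEq n] [RCLike 𝕜]

theorem PosSemidef.sqrt_eq_cfcSqrt_s9 {A : Matrix n n 𝕜} (hA : A.PosSemidef) :
    hA.sqrt = CFC.sqrt A := by
  rw [CFC.sqrt_eq_cfc, cfc_nnreal_eq_real _ A, hA.1.cfc_eq, IsHermitian.cfc,
    Unitary.conjStarAlgAut_apply, PosSemidef.sqrt]
  congr 3
  ext i
  simp [Real.coe_sqrt, max_eq_left (hA.eigenvalues_nonneg i)]

theorem PosSemidef.trace_sqrt {A : Matrix n n 𝕜} (hA : A.PosSemidef) :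
    hA.sqrt.trace = ∑ i, (√(hA.1.eigenvalues i) : 𝕜) := by
  rw [PosSemidef.sqrt, trace_mul_cycle, Unitary.coe_star_mul_self, Matrix.one_mul, trace_diagonal]
  rfl

theorem trace_sqrt_conjTranspose_mul_self (X : Matrix n n 𝕜) :
    (posSemidef_conjTranspose_mul_self X).sqrt.trace =
      (posSemidef_self_mul_conjTranspose X).sqrt.trace := by
  have h := ((posSemidef_conjTranspose_mul_self X).1.eigenvalues_eq_eigenvalues_iff
    (posSemidef_self_mul_conjTranspose X).1).2 (charpoly_mul_comm _ _)
  simp only [PosSemidef.trace_sqrt, h]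

theorem posSemidef_fromBlocks_sqrt (X : Matrix m n 𝕜) :
    (fromBlocks (CFC.sqrt (X * Xᴴ)) X Xᴴ (CFC.sqrt (Xᴴ * X))).PosSemidef := by
  set H : Matrix (m ⊕ n) (m ⊕ n) 𝕜 := fromBlocks 0 X Xᴴ 0
  have hH : IsSelfAdjoint H := by
    simp [H, IsSelfAdjoint, star_eq_conjTranspose, fromBlocks_conjTranspose]
  have habs : CFC.abs H = fromBlocks (CFC.sqrt (X * Xᴴ)) 0 0 (CFC.sqrt (Xᴴ * X)) := by
    have hD := (CFC.sqrt_nonneg (X * Xᴴ)).posSemidef.fromBlocks_zero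
      (CFC.sqrt_nonneg (Xᴴ * X)).posSemidef
    rw [CFC.abs, CFC.sqrt_eq_iff _ _ (star_mul_self_nonneg _) hD.nonneg]
    simp [H, fromBlocks_multiply, star_eq_conjTranspose, fromBlocks_conjTranspose,
      CFC.sqrt_mul_sqrt_self _ (posSemidef_self_mul_conjTranspose X).nonneg,
      CFC.sqrt_mul_sqrt_self _ (posSemidef_conjTranspose_mul_self X).nonneg]
  have hsum : fromBlocks (CFC.sqrt (X * Xᴴ)) X Xᴴ (CFC.sqrt (Xᴴ * X)) = CFC.abs H + H := by
    simp [habs, H, fromBlocks_add]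
  rw [hsum, CFC.abs_add_self H]
  exact (CFC.posPart_nonneg H).posSemidef.smul zero_le_two

end Sqrt

end Matrix

/-- If X is a d×d complex matrix with trace norm Tr√(XX†) = 1, then
γ = (1/2)(|00⟩⟨00|⊗√(XX†) + |00⟩⟨11|⊗X + |11⟩⟨00|⊗X† + |11⟩⟨11|⊗√(X†X))
is a density matrix: positive semidefinite with unit trace. -/
theorem stmt_9 {d : ℕ} (X : Matrix (Fin d) (Fin d) ℂ)
    (htr : (Matrix.posSemidef_self_mul_conjTranspose X).sqrt.trace = 1) :
    ((1 / 2 : ℂ) •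
      (vecMulVec (ket2 0 0) (star (ket2 0 0)) ⊗ₖ (Matrix.posSemidef_self_mul_conjTranspose X).sqrt
        + vecMulVec (ket2 0 0) (star (ket2 1 1)) ⊗ₖ X
        + vecMulVec (ket2 1 1) (star (ket2 0 0)) ⊗ₖ Xᴴ
        + vecMulVec (ket2 1 1) (star (ket2 1 1)) ⊗ₖ
            (Matrix.posSemidef_conjTranspose_mul_self X).sqrt)).PosSemidef ∧
    ((1 / 2 : ℂ) •
      (vecMulVec (ket2 0 0) (star (ket2 0 0)) ⊗ₖ (Matrix.posSemidef_self_mul_conjTranspose X).sqrt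
        + vecMulVec (ket2 0 0) (star (ket2 1 1)) ⊗ₖ X
        + vecMulVec (ket2 1 1) (star (ket2 0 0)) ⊗ₖ Xᴴ
        + vecMulVec (ket2 1 1) (star (ket2 1 1)) ⊗ₖ
            (Matrix.posSemidef_conjTranspose_mul_self X).sqrt)).trace = 1 := by
  have hB : (posSemidef_conjTranspose_mul_self X).sqrt.trace = 1 :=
    (trace_sqrt_conjTranspose_mul_self X).trans htr
  constructor
  · rw [kronecker_vecMulVec_add_eq_fromCols_mul_fromBlocks,
      (posSemidef_self_mul_conjTranspose X).sqrt_eq_cfcSqrt_s9,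
      (posSemidef_conjTranspose_mul_self X).sqrt_eq_cfcSqrt_s9]
    exact ((posSemidef_fromBlocks_sqrt X).mul_mul_conjTranspose_same _).smul (by positivity)
  · norm_num [trace_kronecker, ket2, dotProduct, htr, hB]
end
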